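/- For every natural number n ≥ 2, letting k = n(n-1)/2 + 1, there exists a surjective colouring Δ : ℕ^(2) ↠ [k] with |F_Δ| = n; consequently ψ(n(n-1)/2 + 1) = n. -/

import Mathlib

/-- The colour of the unordered edge `{x, y}` (only values on distinct pairs matter). -/
def edgeCol (Δ : ℕ → ℕ → ℕ) (x y : ℕ) : ℕ := Δ (min x y) (max x y)

/-- `colourSet Δ X` is the set of colours attained by `Δ` on edges with both endpoints in `X`. -/
def colourSet (Δ : ℕ → ℕ → ℕ) (X : Set ℕ) : Set ℕ :=
  {c | ∃ x ∈ X, ∃ y ∈ X, x ≠ y ∧ edgeCol Δ x y = c}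

/-- `Δ` is a surjective colouring `ℕ^(2) ↠ [k]` of the edges of the complete
graph on `ℕ` with colour set `[k] = {1, …, k}`. -/
def IsColouring (Δ : ℕ → ℕ → ℕ) (k : ℕ) : Prop :=
  (∀ x y : ℕ, x ≠ y → edgeCol Δ x y ∈ Finset.Icc 1 k) ∧
  (∀ c ∈ Finset.Icc 1 k, ∃ x y : ℕ, x ≠ y ∧ edgeCol Δ x y = c)

/-- `F_Δ`: the set of `m ∈ [k]` for which some infinite `X ⊆ ℕ` is exactly `m`-coloured. -/
def FSet (Δ : ℕ → ℕ → ℕ) (k : ℕ) : Set ℕ :=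
  {m | m ∈ Finset.Icc 1 k ∧ ∃ X : Set ℕ, X.Infinite ∧ (colourSet Δ X).ncard = m}

/-- `ψ k`: the minimum of `|F_Δ|` over all surjective colourings `Δ : ℕ^(2) ↠ [k]`. -/
noncomputable def psi (k : ℕ) : ℕ :=
  sInf {m | ∃ Δ : ℕ → ℕ → ℕ, IsColouring Δ k ∧ (FSet Δ k).ncard = m}

/-!
By Ramsey's theorem some infinite `M` is monochromatic, in a colour `c₀`. Fix a finite `S` on which
all `k` colours occur and refine `M` to an infinite `Y` into which each `a ∈ S` sends edges of a
single colour `φ a`. For `T ⊆ S` the colours of `T ∪ Y` are then `c₀`, the `φ a` with `a ∈ T` and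
the colours inside `T`, the footprint of `T`; so all footprint sizes of subsets of `S` lie in `F_Δ`.
If subsets of `S` have `D` footprint sizes, then `|footprint S| ≤ C(D, 2) + 1`: remove the vertex
`x` whose removal loses the fewest colours, say `d`. Were `d` larger than the number of sizes for
`S \ {x}`, counting the colours lost by the other vertices (a colour other than `c₀` is lost by at
most two vertices) would contradict `d ≤ |S|`. Hence `k ≤ C(|F_Δ|, 2) + 1`, with equality for the
small-rainbow colouring, whose infinite sets are exactly `(C(s, 2) + 1)`-coloured, `s ≤ n`.
-/

open Finset

section Footprint

variable {α γ : Type*} [DecidableEq γ]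

def footprint (c₀ : γ) (φ : α → γ) (e : α → α → γ) (T : Finset α) : Finset γ :=
  insert c₀ (T.image φ ∪ T.offDiag.image fun p => e p.1 p.2)

def footprintCards (c₀ : γ) (φ : α → γ) (e : α → α → γ) (S : Finset α) : Finset ℕ :=
  S.powerset.image fun T => #(footprint c₀ φ e T)

variable {c₀ c : γ} {φ : α → γ} {e : α → α → γ} {S T : Finset α} {x y : α}

@[simp]
lemma mem_footprint : c ∈ footprint c₀ φ e T ↔
    c = c₀ ∨ (∃ a ∈ T, φ a = c) ∨ ∃ a ∈ T, ∃ b ∈ T, a ≠ b ∧ e a b = c := by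
  simp [footprint, and_assoc]

lemma self_mem_footprint : c₀ ∈ footprint c₀ φ e T :=
  mem_insert_self _ _

lemma footprint_mono (h : S ⊆ T) : footprint c₀ φ e S ⊆ footprint c₀ φ e T := by
  unfold footprint
  gcongr

lemma footprint_empty : footprint c₀ φ e ∅ = {c₀} := by
  simp [footprint]

variable [DecidableEq α]

lemma card_footprint_sdiff_footprint_erase_le (he : ∀ a b, e a b = e b a) (hx : x ∈ S) :
    #(footprint c₀ φ e S \ footprint c₀ φ e (S.erase x)) ≤ #S := by
  have hsub : footprint c₀ φ e S \ footprint c₀ φ e (S.erase x) ⊆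
      insert (φ x) ((S.erase x).image (e x)) := by
    intro c hc
    simp only [mem_sdiff, mem_footprint, mem_erase] at hc
    simp only [mem_insert, mem_image, mem_erase]
    grind
  calc _ ≤ #(insert (φ x) ((S.erase x).image (e x))) := card_le_card hsub
    _ ≤ #((S.erase x).image (e x)) + 1 := card_insert_le _ _
    _ ≤ #(S.erase x) + 1 := by gcongr; exact card_image_le
    _ = #S := card_erase_add_one hx

lemma footprint_sdiff_footprint_erase_subset (he : ∀ a b, e a b = e b a) (hxy : x ≠ y) :
    footprint c₀ φ e S \ footprint c₀ φ e (S.erase y) ⊆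
      insert (e x y) (footprint c₀ φ e (S.erase x)) := by
  intro c hc
  simp only [mem_sdiff, mem_footprint, mem_erase] at hc
  simp only [mem_insert, mem_footprint, mem_erase]
  grind

lemma card_filter_notMem_footprint_erase_le_two (hc : c ∈ footprint c₀ φ e S) (hc₀ : c ≠ c₀) :
    #{y ∈ S | c ∉ footprint c₀ φ e (S.erase y)} ≤ 2 := by
  simp only [mem_footprint] at hc
  rcases hc with rfl | ⟨a, ha, rfl⟩ | ⟨a, ha, b, hb, hab, rfl⟩
  · exact absurd rfl hc₀
  · calc _ ≤ #{a} := card_le_card fun y hy => by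
          simp only [mem_filter, mem_footprint, mem_erase] at hy
          grind
      _ ≤ 2 := by simp
  · calc _ ≤ #{a, b} := card_le_card fun y hy => by
          simp only [mem_filter, mem_footprint, mem_erase] at hy
          grind
      _ ≤ 2 := card_le_two

/-- Double counting: by the choice of `x`, each `y ≠ x` loses at least `d - 1` colours of
`S.erase x` other than `c₀` (all it loses but `e x y`), where `d` is the number `x` loses. -/
lemma card_erase_mul_le_card_footprint_erase_mul_two (he : ∀ a b, e a b = e b a)
    (hmax : ∀ y ∈ S, #(footprint c₀ φ e (S.erase y)) ≤ #(footprint c₀ φ e (S.erase x))) :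
    #(S.erase x) * (#(footprint c₀ φ e S) - #(footprint c₀ φ e (S.erase x)) - 1) ≤
      #((footprint c₀ φ e (S.erase x)).erase c₀) * 2 := by
  have hsub (y : α) : footprint c₀ φ e (S.erase y) ⊆ footprint c₀ φ e S :=
    footprint_mono (erase_subset y S)
  refine card_mul_le_card_mul (fun y c => c ∉ footprint c₀ φ e (S.erase y)) (fun y hy => ?_)
    fun c hc => ?_
  · have hlost : footprint c₀ φ e S \ footprint c₀ φ e (S.erase y) ⊆ insert (e x y)
        (((footprint c₀ φ e (S.erase x)).erase c₀).bipartiteAbove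
          (fun y c => c ∉ footprint c₀ φ e (S.erase y)) y) := by
      intro c hc
      have hc' := footprint_sdiff_footprint_erase_subset he (mem_erase.1 hy).1.symm hc
      rw [mem_sdiff] at hc
      have hcc₀ : c ≠ c₀ := by rintro rfl; exact hc.2 self_mem_footprint
      simp only [mem_insert, mem_bipartiteAbove, mem_erase] at hc' ⊢
      tauto
    have := (card_le_card hlost).trans (card_insert_le _ _)
    rw [card_sdiff_of_subset (hsub y)] at this
    have := hmax y (mem_of_mem_erase hy)
    omega
  · refine (card_le_card (filter_subset_filter _ (erase_subset x S))).trans ?_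
    exact card_filter_notMem_footprint_erase_le_two (hsub x (mem_of_mem_erase hc))
      (ne_of_mem_erase hc)

lemma card_footprint_le_card_footprint_erase_add (he : ∀ a b, e a b = e b a) (hx : x ∈ S)
    (hmax : ∀ y ∈ S, #(footprint c₀ φ e (S.erase y)) ≤ #(footprint c₀ φ e (S.erase x)))
    {D : ℕ} (hD : 1 ≤ D) (hxD : #(footprint c₀ φ e (S.erase x)) ≤ D.choose 2 + 1) :
    #(footprint c₀ φ e S) ≤ #(footprint c₀ φ e (S.erase x)) + D := by
  have hcount := card_erase_mul_le_card_footprint_erase_mul_two he hmax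
  have hdS := card_footprint_sdiff_footprint_erase_le (c₀ := c₀) (φ := φ) he hx
  rw [card_sdiff_of_subset (footprint_mono (erase_subset x S))] at hdS
  rw [card_erase_of_mem hx, card_erase_of_mem self_mem_footprint] at hcount
  set d := #(footprint c₀ φ e S) - #(footprint c₀ φ e (S.erase x))
  have hchoose : 2 * D.choose 2 = D * (D - 1) := by
    rw [Nat.choose_two_right]; exact Nat.mul_div_cancel' (Nat.even_mul_pred_self D).two_dvd
  by_contra! hlt
  have h1 : (d - 1) * (d - 1) ≤ (#S - 1) * (d - 1) := by gcongr
  have h2 : D * (D - 1) ≤ (d - 1) * (d - 2) := Nat.mul_le_mul (by omega) (by omega)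
  have h3 : (d - 1) * (d - 2) < (d - 1) * (d - 1) :=
    Nat.mul_lt_mul_of_pos_left (by omega) (by omega)
  omega

theorem card_footprint_le (he : ∀ a b, e a b = e b a) (S : Finset α) :
    #(footprint c₀ φ e S) ≤ (#(footprintCards c₀ φ e S)).choose 2 + 1 := by
  induction S using Finset.strongInduction with
  | H S ih =>
  rcases S.eq_empty_or_nonempty with rfl | hS
  · simp [footprint_empty]
  obtain ⟨x, hx, hmax⟩ := S.exists_max_image (fun y => #(footprint c₀ φ e (S.erase y))) hS
  set D := #(footprintCards c₀ φ e (S.erase x))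
  have hsub : footprintCards c₀ φ e (S.erase x) ⊆ footprintCards c₀ φ e S :=
    image_subset_image (powerset_mono.2 (erase_subset x S))
  have ih' := ih _ (erase_ssubset hx)
  rcases (card_le_card (footprint_mono (φ := φ) (c₀ := c₀) (e := e) (erase_subset x S))).eq_or_lt
    with heq | hlt
  · rw [← heq]
    exact ih'.trans (Nat.add_le_add_right (Nat.choose_le_choose 2 (card_le_card hsub)) 1)
  have hnew : #(footprint c₀ φ e S) ∉ footprintCards c₀ φ e (S.erase x) := by
    simp only [footprintCards, mem_image, mem_powerset, not_exists, not_and]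
    intro T hT hTS
    have := card_le_card (footprint_mono (c₀ := c₀) (φ := φ) (e := e) hT)
    omega
  have hDS : D + 1 ≤ #(footprintCards c₀ φ e S) :=
    card_lt_card ⟨hsub, fun h => hnew (h (mem_image_of_mem _ (mem_powerset_self S)))⟩
  have hD : 1 ≤ D := card_pos.2 ⟨_, mem_image_of_mem _ (empty_mem_powerset _)⟩
  calc #(footprint c₀ φ e S) ≤ #(footprint c₀ φ e (S.erase x)) + D :=
        card_footprint_le_card_footprint_erase_add he hx hmax hD ih'
    _ ≤ D.choose 2 + 1 + D := by gcongr
    _ = (D + 1).choose 2 + 1 := by rw [Nat.choose_succ_succ', Nat.choose_one_right]; ring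
    _ ≤ (#(footprintCards c₀ φ e S)).choose 2 + 1 := by gcongr

end Footprint

section Infinite

variable {α γ : Type*}

lemma Set.Infinite.exists_infinite_fiber {B : Set α} (hB : B.Infinite) {f : α → γ}
    {C : Finset γ} (hf : Set.MapsTo f B C) : ∃ c ∈ C, {x ∈ B | f x = c}.Infinite := by
  by_contra! h
  exact hB ((C.finite_toSet.biUnion h).subset fun x hx => Set.mem_biUnion (hf hx) ⟨hx, rfl⟩)

variable {e : α → α → γ} {C : Finset γ}

lemma Set.Infinite.exists_infinite_subset_forall_eq {B : Set α} (hB : B.Infinite)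
    (hC : ∀ x y, x ≠ y → e x y ∈ C) (a : α) :
    ∃ c ∈ C, ∃ B' ⊆ B \ {a}, B'.Infinite ∧ ∀ y ∈ B', e a y = c := by
  obtain ⟨c, hc, hinf⟩ := (hB.sdiff (Set.finite_singleton a)).exists_infinite_fiber
    (f := e a) fun y hy => hC a y (Ne.symm hy.2)
  exact ⟨c, hc, _, fun y hy => hy.1, hinf, fun y hy => hy.2⟩

theorem Set.Infinite.exists_infinite_monochromatic (he : ∀ a b, e a b = e b a)
    (hC : ∀ x y, x ≠ y → e x y ∈ C) {B : Set α} (hB : B.Infinite) :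
    ∃ c ∈ C, ∃ M ⊆ B, M.Infinite ∧ ∀ x ∈ M, ∀ y ∈ M, x ≠ y → e x y = c := by
  -- Pick `pt (D i) ∈ D i` with `D (i + 1) ⊆ D i \ {pt (D i)}` receiving only the colour
  -- `col (D i)` from it; then keep the points whose `col` is one that occurs infinitely often.
  have step : ∀ D : {D : Set α // D.Infinite}, ∃ a ∈ D.1, ∃ c ∈ C, ∃ D' ⊆ D.1 \ {a},
      D'.Infinite ∧ ∀ y ∈ D', e a y = c := fun D =>
    ⟨_, D.2.nonempty.some_mem, D.2.exists_infinite_subset_forall_eq hC _⟩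
  choose pt hpt col hcol nxt hnxt hnxt_inf hnxt_col using step
  let D : ℕ → {D : Set α // D.Infinite} :=
    fun i => (fun D => ⟨nxt D, hnxt_inf D⟩)^[i] ⟨B, hB⟩
  have hD_succ (i : ℕ) : (D (i + 1)).1 = nxt (D i) := by
    simp only [D, Function.iterate_succ_apply']
  have hD_anti : Antitone fun i => (D i).1 := antitone_nat_of_succ_le fun i =>
    (hD_succ i).trans_le ((hnxt _).trans Set.sdiff_subset)
  have hlater {i j : ℕ} (hij : i < j) : pt (D j) ∈ nxt (D i) :=
    hD_succ i ▸ hD_anti hij (hpt _)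
  have hinj : Function.Injective fun i => pt (D i) :=
    .of_lt_imp_ne fun i j hij h => (hnxt _ (hlater hij)).2 h.symm
  obtain ⟨c, hc, hinf⟩ := Set.infinite_univ.exists_infinite_fiber
    (f := fun i => col (D i)) fun i _ => hcol (D i)
  refine ⟨c, hc, (fun i => pt (D i)) '' {i ∈ Set.univ | col (D i) = c}, ?_,
    hinf.image hinj.injOn, ?_⟩
  · rintro _ ⟨i, -, rfl⟩
    exact hD_anti (Nat.zero_le i) (hpt _)
  · rintro _ ⟨i, hi, rfl⟩ _ ⟨j, hj, rfl⟩ hne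
    rcases lt_or_gt_of_ne (ne_of_apply_ne (fun i => pt (D i)) hne) with hij | hij
    · exact (hnxt_col _ _ (hlater hij)).trans hi.2
    · exact (he _ _).trans ((hnxt_col _ _ (hlater hij)).trans hj.2)

theorem Set.Infinite.exists_infinite_subset_forall_eq_of_finset (hC : ∀ x y, x ≠ y → e x y ∈ C)
    (S : Finset α) {B : Set α} (hB : B.Infinite) :
    ∃ Y ⊆ B, Y.Infinite ∧ ∀ a ∈ S, ∃ c, ∀ y ∈ Y, e a y = c := by
  induction S using Finset.cons_induction with
  | empty => exact ⟨B, subset_rfl, hB, by simp⟩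
  | cons a S ha ih =>
    obtain ⟨Y, hYB, hY, hS⟩ := ih
    obtain ⟨c, -, Y', hY'Y, hY', hc⟩ := hY.exists_infinite_subset_forall_eq hC a
    have hY'Y : Y' ⊆ Y := hY'Y.trans Set.sdiff_subset
    refine ⟨Y', hY'Y.trans hYB, hY', ?_⟩
    simp only [Finset.mem_cons, forall_eq_or_imp]
    exact ⟨⟨c, hc⟩, fun b hb => (hS b hb).imp fun d hd y hy => hd y (hY'Y hy)⟩

end Infinite

section LowerBound

variable {Δ : ℕ → ℕ → ℕ} {k : ℕ}

lemma edgeCol_comm (Δ : ℕ → ℕ → ℕ) (x y : ℕ) : edgeCol Δ x y = edgeCol Δ y x := by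
  rw [edgeCol, edgeCol, min_comm, max_comm]

lemma colourSet_mono {X Y : Set ℕ} (h : X ⊆ Y) : colourSet Δ X ⊆ colourSet Δ Y := by
  rintro c ⟨x, hx, y, hy, hxy, rfl⟩
  exact ⟨x, h hx, y, h hy, hxy, rfl⟩

lemma colourSet_union_eq_footprint {T : Finset ℕ} {Y : Set ℕ} {c₀ : ℕ} {φ : ℕ → ℕ}
    (hY : Y.Infinite) (hYc₀ : ∀ x ∈ Y, ∀ y ∈ Y, x ≠ y → edgeCol Δ x y = c₀)
    (hφ : ∀ a ∈ T, ∀ y ∈ Y, edgeCol Δ a y = φ a) :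
    colourSet Δ (↑T ∪ Y) = footprint c₀ φ (edgeCol Δ) T := by
  ext c
  simp only [colourSet, Set.mem_union, Finset.mem_coe, Set.mem_ofPred_eq, mem_footprint]
  constructor
  · rintro ⟨x, hx, y, hy, hxy, rfl⟩
    by_cases hxT : x ∈ T
    · by_cases hyT : y ∈ T
      · exact Or.inr (Or.inr ⟨x, hxT, y, hyT, hxy, rfl⟩)
      · exact Or.inr (Or.inl ⟨x, hxT, (hφ x hxT y (hy.resolve_left hyT)).symm⟩)
    · by_cases hyT : y ∈ T
      · exact Or.inr (Or.inl ⟨y, hyT, by rw [edgeCol_comm, hφ y hyT x (hx.resolve_left hxT)]⟩)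
      · exact Or.inl (hYc₀ x (hx.resolve_left hxT) y (hy.resolve_left hyT) hxy)
  · rintro (rfl | ⟨a, ha, rfl⟩ | ⟨a, ha, b, hb, hab, rfl⟩)
    · obtain ⟨x, hx, y, hy, hxy⟩ := hY.nontrivial
      exact ⟨x, Or.inr hx, y, Or.inr hy, hxy, hYc₀ x hx y hy hxy⟩
    · obtain ⟨y, hy, hya⟩ := (hY.sdiff (Set.finite_singleton a)).nonempty
      exact ⟨a, Or.inl ha, y, Or.inr hy, Ne.symm hya, hφ a ha y hy⟩
    · exact ⟨a, Or.inl ha, b, Or.inl hb, hab, rfl⟩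

lemma IsColouring.colourSet_subset (hΔ : IsColouring Δ k) (X : Set ℕ) :
    colourSet Δ X ⊆ Finset.Icc 1 k := by
  rintro c ⟨x, -, y, -, hxy, rfl⟩
  exact hΔ.1 x y hxy

lemma IsColouring.exists_finset_colourSet_eq (hΔ : IsColouring Δ k) :
    ∃ S : Finset ℕ, colourSet Δ S = Finset.Icc 1 k := by
  choose! x y hxy hc using hΔ.2
  refine ⟨(Finset.Icc 1 k).image x ∪ (Finset.Icc 1 k).image y,
    (hΔ.colourSet_subset _).antisymm fun c hc' => ?_⟩
  have hc' : c ∈ Finset.Icc 1 k := hc'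
  exact ⟨x c, Finset.mem_union_left _ (Finset.mem_image_of_mem x hc'),
    y c, Finset.mem_union_right _ (Finset.mem_image_of_mem y hc'), hxy c hc', hc c hc'⟩

lemma finite_FSet (Δ : ℕ → ℕ → ℕ) (k : ℕ) : (FSet Δ k).Finite :=
  (Finset.Icc 1 k).finite_toSet.subset fun _ hm => hm.1

theorem IsColouring.le_choose_two_ncard_FSet_add_one (hΔ : IsColouring Δ k) :
    k ≤ (FSet Δ k).ncard.choose 2 + 1 := by
  obtain ⟨c₀, -, M, -, hM, hMc₀⟩ :=
    Set.infinite_univ.exists_infinite_monochromatic (edgeCol_comm Δ) hΔ.1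
  obtain ⟨S, hS⟩ := hΔ.exists_finset_colourSet_eq
  obtain ⟨Y, hYM, hY, hφ⟩ := hM.exists_infinite_subset_forall_eq_of_finset hΔ.1 S
  choose! φ hφ using hφ
  have hfp {T : Finset ℕ} (hT : T ⊆ S) :
      colourSet Δ (↑T ∪ Y) = footprint c₀ φ (edgeCol Δ) T :=
    colourSet_union_eq_footprint hY (fun x hx y hy => hMc₀ x (hYM hx) y (hYM hy))
      fun a ha => hφ a (hT ha)
  have hfpS : footprint c₀ φ (edgeCol Δ) S = Finset.Icc 1 k := by
    refine Finset.coe_injective ((hfp subset_rfl) ▸ (hΔ.colourSet_subset _).antisymm ?_)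
    exact hS ▸ colourSet_mono Set.subset_union_left
  have hk : #(footprint c₀ φ (edgeCol Δ) S) = k := by simp [hfpS]
  have hcards : ↑(footprintCards c₀ φ (edgeCol Δ) S) ⊆ FSet Δ k := by
    intro m hm
    obtain ⟨T, hT, rfl⟩ := Finset.mem_image.1 hm
    rw [Finset.mem_powerset] at hT
    refine ⟨?_, ↑T ∪ Y, hY.mono Set.subset_union_right, by rw [hfp hT, Set.ncard_coe_finset]⟩
    exact Finset.mem_Icc.2 ⟨Finset.card_pos.2 ⟨c₀, self_mem_footprint⟩,
      hk ▸ Finset.card_le_card (footprint_mono hT)⟩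
  calc k = #(footprint c₀ φ (edgeCol Δ) S) := hk.symm
    _ ≤ (#(footprintCards c₀ φ (edgeCol Δ) S)).choose 2 + 1 :=
      card_footprint_le (edgeCol_comm Δ) S
    _ ≤ (FSet Δ k).ncard.choose 2 + 1 := by
      gcongr
      exact Set.ncard_coe_finset _ ▸ Set.ncard_le_ncard hcards (finite_FSet Δ k)

end LowerBound

section SmallRainbow

noncomputable def rainbowCode (n : ℕ) : (range n).powersetCard 2 ≃ Fin (n.choose 2) :=
  equivFinOfCardEq (by simp)

noncomputable def rainbowColour (n : ℕ) (A : Finset ℕ) : ℕ :=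
  if h : A ∈ (range n).powersetCard 2 then rainbowCode n ⟨A, h⟩ + 1 else n.choose 2 + 1

noncomputable def smallRainbow (n x y : ℕ) : ℕ := rainbowColour n {x, y}

variable {n : ℕ} {A : Finset ℕ}

lemma rainbowColour_of_mem (h : A ∈ (range n).powersetCard 2) :
    rainbowColour n A = rainbowCode n ⟨A, h⟩ + 1 :=
  dif_pos h

lemma rainbowColour_of_notMem (h : A ∉ (range n).powersetCard 2) :
    rainbowColour n A = n.choose 2 + 1 :=
  dif_neg h

lemma rainbowColour_mem_Icc (A : Finset ℕ) : rainbowColour n A ∈ Icc 1 (n.choose 2 + 1) := by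
  by_cases h : A ∈ (range n).powersetCard 2
  · rw [rainbowColour_of_mem h, mem_Icc]
    have := (rainbowCode n ⟨A, h⟩).isLt
    omega
  · simp [rainbowColour_of_notMem h]

lemma edgeCol_smallRainbow (x y : ℕ) : edgeCol (smallRainbow n) x y = rainbowColour n {x, y} := by
  rcases le_total x y with h | h <;> simp [edgeCol, smallRainbow, h, pair_comm]

lemma isColouring_smallRainbow (n : ℕ) : IsColouring (smallRainbow n) (n.choose 2 + 1) := by
  refine ⟨fun x y _ => edgeCol_smallRainbow x y ▸ rainbowColour_mem_Icc _, fun c hc => ?_⟩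
  rw [mem_Icc] at hc
  rcases hc.2.lt_or_eq with hlt | rfl
  · set A := (rainbowCode n).symm ⟨c - 1, by omega⟩
    have hA : rainbowColour n A = c := by
      rw [rainbowColour_of_mem A.2, Subtype.coe_eta, Equiv.apply_symm_apply]
      simp only
      omega
    obtain ⟨x, y, hxy, hAxy⟩ := card_eq_two.1 (mem_powersetCard.1 A.2).2
    exact ⟨x, y, hxy, by rw [edgeCol_smallRainbow, ← hAxy, hA]⟩
  · refine ⟨n, n + 1, by omega, ?_⟩
    rw [edgeCol_smallRainbow, rainbowColour_of_notMem]
    simp [insert_subset_iff]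

lemma colourSet_smallRainbow {X : Set ℕ} [DecidablePred (· ∈ X)] (hX : X.Infinite) :
    colourSet (smallRainbow n) X = ↑(insert (n.choose 2 + 1)
      ((((range n).filter (· ∈ X)).powersetCard 2).image (rainbowColour n))) := by
  ext c
  simp only [colourSet, edgeCol_smallRainbow, Set.mem_ofPred_eq, coe_insert, coe_image,
    Set.mem_insert_iff, Set.mem_image, mem_coe]
  constructor
  · rintro ⟨x, hx, y, hy, hxy, rfl⟩
    by_cases h : {x, y} ∈ (range n).powersetCard 2
    · refine Or.inr ⟨{x, y}, ?_, rfl⟩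
      simp only [mem_powersetCard, insert_subset_iff, singleton_subset_iff, mem_filter,
        mem_range] at h ⊢
      exact ⟨⟨⟨h.1.1, hx⟩, h.1.2, hy⟩, h.2⟩
    · exact Or.inl (rainbowColour_of_notMem h)
  · rintro (rfl | ⟨A, hA, rfl⟩)
    · obtain ⟨y, hy, hyn⟩ := (hX.sdiff (Set.finite_Iio n)).nonempty
      obtain ⟨x, hx, hxy⟩ := (hX.sdiff (Set.finite_singleton y)).nonempty
      refine ⟨x, hx, y, hy, hxy, rainbowColour_of_notMem ?_⟩
      simp only [mem_powersetCard, insert_subset_iff, singleton_subset_iff, mem_range, not_and]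
      exact fun h _ => hyn h.2
    · obtain ⟨x, y, hxy, rfl⟩ := card_eq_two.1 (mem_powersetCard.1 hA).2
      have hxyX := (mem_powersetCard.1 hA).1
      simp only [insert_subset_iff, singleton_subset_iff, mem_filter] at hxyX
      exact ⟨x, hxyX.1.2, y, hxyX.2.2, hxy, rfl⟩

lemma card_insert_image_rainbowColour {S : Finset ℕ} (hS : S ⊆ range n) :
    #(insert (n.choose 2 + 1) ((S.powersetCard 2).image (rainbowColour n))) =
      (#S).choose 2 + 1 := by
  have hS : S.powersetCard 2 ⊆ (range n).powersetCard 2 := powersetCard_mono hS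
  have hinj : Set.InjOn (rainbowColour n) ↑(S.powersetCard 2) := fun A hA B hB hAB => by
    rw [rainbowColour_of_mem (hS hA), rainbowColour_of_mem (hS hB)] at hAB
    exact congrArg Subtype.val
      ((rainbowCode n).injective (a₁ := ⟨A, hS hA⟩) (a₂ := ⟨B, hS hB⟩) (Fin.ext (by omega)))
  have htop : n.choose 2 + 1 ∉ (S.powersetCard 2).image (rainbowColour n) := fun h => by
    obtain ⟨A, hA, h⟩ := mem_image.1 h
    have := (rainbowCode n ⟨A, hS hA⟩).isLt
    rw [rainbowColour_of_mem (hS hA)] at h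
    omega
  rw [card_insert_of_notMem htop, card_image_of_injOn hinj, card_powersetCard]

lemma exists_ncard_colourSet_smallRainbow {X : Set ℕ} (hX : X.Infinite) :
    ∃ s ≤ n, (colourSet (smallRainbow n) X).ncard = s.choose 2 + 1 := by
  classical
  refine ⟨#((range n).filter (· ∈ X)), (card_filter_le _ _).trans (card_range n).le, ?_⟩
  rw [colourSet_smallRainbow hX, Set.ncard_coe_finset,
    card_insert_image_rainbowColour (filter_subset _ _)]

lemma ncard_FSet_smallRainbow_le (hn : 1 ≤ n) :
    (FSet (smallRainbow n) (n.choose 2 + 1)).ncard ≤ n := by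
  have hsub : FSet (smallRainbow n) (n.choose 2 + 1) ⊆
      ↑((Icc 1 n).image fun s => s.choose 2 + 1) := by
    rintro m ⟨-, X, hX, rfl⟩
    obtain ⟨s, hs, hcard⟩ := exists_ncard_colourSet_smallRainbow (n := n) hX
    rw [hcard]
    rcases Nat.eq_zero_or_pos s with rfl | hs0
    · exact mem_image.2 ⟨1, mem_Icc.2 ⟨le_rfl, hn⟩, rfl⟩
    · exact mem_image_of_mem _ (mem_Icc.2 ⟨hs0, hs⟩)
  calc _ ≤ ((Icc 1 n).image fun s => s.choose 2 + 1).card :=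
        Set.ncard_coe_finset _ ▸ Set.ncard_le_ncard hsub (finite_toSet _)
    _ ≤ n := card_image_le.trans (by simp)

end SmallRainbow

lemma Nat.le_of_choose_two_le_choose_two {m n : ℕ} (hn : 2 ≤ n) (h : n.choose 2 ≤ m.choose 2) :
    n ≤ m := by
  by_contra! hmn
  obtain _ | m := m
  · simp only [Nat.choose_zero_succ, nonpos_iff_eq_zero] at h
    exact (Nat.choose_pos hn).ne' h
  · have hstep : (m + 1 + 1).choose 2 = (m + 1).choose 2 + (m + 1) := by
      rw [Nat.choose_succ_succ', Nat.choose_one_right, add_comm]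
    have := Nat.choose_le_choose 2 (show m + 1 + 1 ≤ n by omega)
    omega

/-- For every `n ≥ 2` and `k = n(n-1)/2 + 1` there is a surjective colouring
`Δ : ℕ^(2) ↠ [k]` (the small-rainbow colouring) with `|F_Δ| = n`; consequently
`ψ(n(n-1)/2 + 1) = n`. -/
theorem psi_choose_add_one (n : ℕ) (hn : 2 ≤ n) :
    (∃ Δ : ℕ → ℕ → ℕ, IsColouring Δ (n * (n - 1) / 2 + 1) ∧
      (FSet Δ (n * (n - 1) / 2 + 1)).ncard = n) ∧
    psi (n * (n - 1) / 2 + 1) = n := by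
  rw [← Nat.choose_two_right]
  have hlower {Δ : ℕ → ℕ → ℕ} (hΔ : IsColouring Δ (n.choose 2 + 1)) :
      n ≤ (FSet Δ (n.choose 2 + 1)).ncard :=
    Nat.le_of_choose_two_le_choose_two hn
      (Nat.le_of_add_le_add_right hΔ.le_choose_two_ncard_FSet_add_one)
  have hcol := isColouring_smallRainbow n
  have hrainbow : (FSet (smallRainbow n) (n.choose 2 + 1)).ncard = n :=
    (ncard_FSet_smallRainbow_le (by omega)).antisymm (hlower hcol)
  refine ⟨⟨_, hcol, hrainbow⟩, le_antisymm (Nat.sInf_le ⟨_, hcol, hrainbow⟩)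
    (le_csInf ⟨n, _, hcol, hrainbow⟩ ?_)⟩
  rintro m ⟨Δ, hΔ, rfl⟩
  exact hlower hΔ
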